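/- The edge set of the confusion graph Γ_{a·t}(G) (the confusion graph for the tuple with each t_i repeated a times, i.e., scaled tuple a·t) is contained in the edge set of the a-fold disjunctive power Γ_t(G)^{*a}; consequently χ_f(Γ_{a·t}(G)) ≤ χ_f(Γ_t(G))^a. -/

import Mathlib

/-- A `b`-fold coloring of `Γ` with `k` colors: each vertex gets a `b`-element set of
colors, adjacent vertices get disjoint sets. -/
def IsNFoldColoring {V : Type*} (Γ : SimpleGraph V) (b k : ℕ)
    (c : V → Finset (Fin k)) : Prop :=
  (∀ v, (c v).card = b) ∧ ∀ u v, Γ.Adj u v → Disjoint (c u) (c v)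

/-- The `b`-fold chromatic number `χ^(b)(Γ)`. -/
noncomputable def nfoldChromaticNumber {V : Type*} (Γ : SimpleGraph V) (b : ℕ) : ℕ :=
  sInf {k | ∃ c : V → Finset (Fin k), IsNFoldColoring Γ b k c}

/-- The fractional chromatic number `χ_f(Γ) = inf_b χ^(b)(Γ)/b`. -/
noncomputable def fracChromaticNumber {V : Type*} (Γ : SimpleGraph V) : ℝ :=
  ⨅ b : ℕ+, (nfoldChromaticNumber Γ b : ℝ) / (b : ℝ)

/-- `s` is an independent set of `Γ`. -/
def IsIndepFinset {V : Type*} (Γ : SimpleGraph V) (s : Finset V) : Prop :=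
  ∀ u ∈ s, ∀ v ∈ s, ¬ Γ.Adj u v

/-- The independence number `α(Γ)`. -/
noncomputable def indepNum {V : Type*} [Fintype V] (Γ : SimpleGraph V) : ℕ :=
  sSup {k | ∃ s : Finset V, s.card = k ∧ IsIndepFinset Γ s}

/-- `Γ` is vertex transitive. -/
def IsVertexTransitive {V : Type*} (Γ : SimpleGraph V) : Prop :=
  ∀ u v : V, ∃ σ : Γ ≃g Γ, σ u = v

/-- The confusion graph `Γ_t(G)` of the directed graph `G` on `[n]` with edge
relation `E` (an edge `i → j` means `E i j`), for the integer tuple `t`.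
Vertices are tuples `x` with `x i ∈ {0,1}^{t i}`; two tuples are adjacent iff
they are confusable at some node `j`. -/
def confusionGraph (n : ℕ) (E : Fin n → Fin n → Prop) (t : Fin n → ℕ) :
    SimpleGraph ((i : Fin n) → Fin (t i) → Bool) where
  Adj x z := ∃ j, x j ≠ z j ∧ ∀ i, E i j → x i = z i
  symm := by
    constructor; rintro x z ⟨j, hj, h⟩
    exact ⟨j, fun h' => hj h'.symm, fun i hi => (h i hi).symm⟩
  loopless := by
    constructor; rintro x ⟨j, hj, -⟩
    exact hj rfl

/-- The disjunctive product of two simple graphs. -/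
def disjProd {V₁ V₂ : Type*} (Γ₁ : SimpleGraph V₁) (Γ₂ : SimpleGraph V₂) :
    SimpleGraph (V₁ × V₂) where
  Adj u v := Γ₁.Adj u.1 v.1 ∨ Γ₂.Adj u.2 v.2
  symm := by constructor; rintro u v (h | h); exacts [Or.inl h.symm, Or.inr h.symm]
  loopless := by constructor; rintro u (h | h) <;> exact h.ne rfl

/-- The `a`-fold disjunctive power of `Γ`: vertices are `Fin a → V`, adjacent iff
adjacent in some coordinate. -/
def disjPow {V : Type*} (Γ : SimpleGraph V) (a : ℕ) : SimpleGraph (Fin a → V) where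
  Adj u v := ∃ m, Γ.Adj (u m) (v m)
  symm := by constructor; rintro u v ⟨m, h⟩; exact ⟨m, h.symm⟩
  loopless := by constructor; rintro u ⟨m, h⟩; exact h.ne rfl

/-- The identification of the vertices of `Γ_{a·t}(G)` with those of the `a`-fold
disjunctive power of `Γ_t(G)`: the length-`a·t i` string at coordinate `i` is split
into `a` blocks of length `t i`. -/
def blockSplit (n a : ℕ) (t : Fin n → ℕ)
    (x : (i : Fin n) → Fin (a * t i) → Bool) :
    Fin a → ((i : Fin n) → Fin (t i) → Bool) :=
  fun m i b => x i (finProdFinEquiv (m, b))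

/-! Splitting every string of length `a·tᵢ` into `a` blocks of length `tᵢ` is a graph
homomorphism `Γ_{a·t}(G) → Γ_t(G)^{*a}`: a confusion at node `j` lies in some block `m`,
and the in-neighbours of `j` agree on the whole string, hence on block `m`. A `b`-fold
colouring `c` of `Γ` with `k` colours yields the `bᵃ`-fold colouring `u ↦ ∏ₘ c (u m)` of
`Γ^{*a}` with `kᵃ` colours, so `χ_f(Γ^{*a}) ≤ (k / b)ᵃ`, and pulling back along the
homomorphism gives the bound on `χ_f(Γ_{a·t}(G))`. -/

open Finset

section Colorings

variable {V W : Type*}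

lemma IsNFoldColoring.comp {Γ : SimpleGraph V} {Γ' : SimpleGraph W} {b k : ℕ}
    {c : V → Finset (Fin k)} (hc : IsNFoldColoring Γ b k c) (f : Γ' →g Γ) :
    IsNFoldColoring Γ' b k (c ∘ f) :=
  ⟨fun w => hc.1 (f w), fun _ _ h => hc.2 _ _ (f.map_adj h)⟩

lemma exists_isNFoldColoring [Fintype V] (Γ : SimpleGraph V) (b : ℕ) :
    ∃ (k : ℕ) (c : V → Finset (Fin k)), IsNFoldColoring Γ b k c := by
  let e := Fintype.equivFin V
  -- vertex `v` gets the colours `(e v, j)`, `j : Fin b`, inside `Fin (|V| * b)`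
  let block (v : V) : Fin b ↪ Fin (Fintype.card V * b) :=
    ⟨fun j => finProdFinEquiv (e v, j), fun _ _ h => by
      simpa using (Prod.ext_iff.mp (finProdFinEquiv.injective h)).2⟩
  refine ⟨_, fun v => univ.map (block v), fun v => by simp, fun u v huv => ?_⟩
  rw [disjoint_left]
  simp only [mem_map, mem_univ, true_and, forall_exists_index, not_exists]
  rintro _ j rfl j' h
  exact huv.ne (e.injective (Prod.ext_iff.mp (finProdFinEquiv.injective h)).1.symm)

lemma exists_isNFoldColoring_nfoldChromaticNumber [Finite V] (Γ : SimpleGraph V) (b : ℕ) :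
    ∃ c : V → Finset (Fin (nfoldChromaticNumber Γ b)), IsNFoldColoring Γ b _ c := by
  have := Fintype.ofFinite V
  exact Nat.sInf_mem (exists_isNFoldColoring Γ b)

lemma nfoldChromaticNumber_le_of_hom [Finite V] {Γ : SimpleGraph V} {Γ' : SimpleGraph W}
    (f : Γ' →g Γ) (b : ℕ) : nfoldChromaticNumber Γ' b ≤ nfoldChromaticNumber Γ b := by
  obtain ⟨c, hc⟩ := exists_isNFoldColoring_nfoldChromaticNumber Γ b
  exact Nat.sInf_le ⟨_, hc.comp f⟩

lemma IsNFoldColoring.disjPow {Γ : SimpleGraph V} {b k : ℕ} {c : V → Finset (Fin k)}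
    (hc : IsNFoldColoring Γ b k c) (a : ℕ) :
    IsNFoldColoring (disjPow Γ a) (b ^ a) (k ^ a)
      (fun u => (Fintype.piFinset fun m => c (u m)).map finFunctionFinEquiv.toEmbedding) := by
  refine ⟨fun u => by simp [hc.1], fun u v huv => ?_⟩
  obtain ⟨m, hm⟩ := huv
  rw [disjoint_map]
  exact Fintype.piFinset_disjoint_of_disjoint _ _ (hc.2 _ _ hm)

lemma nfoldChromaticNumber_disjPow_le [Finite V] (Γ : SimpleGraph V) (a b : ℕ) :
    nfoldChromaticNumber (disjPow Γ a) (b ^ a) ≤ nfoldChromaticNumber Γ b ^ a := by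
  obtain ⟨c, hc⟩ := exists_isNFoldColoring_nfoldChromaticNumber Γ b
  exact Nat.sInf_le ⟨_, hc.disjPow a⟩

lemma le_ciInf_pow {ι : Sort*} [Nonempty ι] {f : ι → ℝ} (hf : ∀ i, 0 ≤ f i) {x : ℝ} {a : ℕ}
    (h : ∀ i, x ≤ f i ^ a) : x ≤ (⨅ i, f i) ^ a := by
  -- `y ↦ max y 0 ^ a` is monotone and continuous on all of `ℝ`, so it commutes with `⨅`.
  let F : ℝ → ℝ := fun y => max y 0 ^ a
  have hF : Monotone F := fun y z hyz =>
    pow_le_pow_left₀ (le_max_right y 0) (max_le_max hyz le_rfl) a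
  have hcomm : F (⨅ i, f i) = ⨅ i, F (f i) :=
    hF.map_ciInf_of_continuousAt (by fun_prop) ⟨0, by rintro _ ⟨i, rfl⟩; exact hf i⟩
  have hinf : 0 ≤ ⨅ i, f i := le_ciInf hf
  calc x ≤ ⨅ i, F (f i) := le_ciInf fun i => by simpa [F, max_eq_left (hf i)] using h i
    _ = (⨅ i, f i) ^ a := by rw [← hcomm]; simp [F, max_eq_left hinf]

lemma fracChromaticNumber_le (Γ : SimpleGraph V) (b : ℕ+) :
    fracChromaticNumber Γ ≤ (nfoldChromaticNumber Γ b : ℝ) / b :=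
  ciInf_le ⟨0, by rintro _ ⟨b, rfl⟩; positivity⟩ b

lemma fracChromaticNumber_le_of_hom [Finite V] {Γ : SimpleGraph V} {Γ' : SimpleGraph W}
    (f : Γ' →g Γ) : fracChromaticNumber Γ' ≤ fracChromaticNumber Γ :=
  le_ciInf fun b => (fracChromaticNumber_le Γ' b).trans <| by
    gcongr
    exact nfoldChromaticNumber_le_of_hom f b

lemma fracChromaticNumber_disjPow_le [Finite V] (Γ : SimpleGraph V) (a : ℕ) :
    fracChromaticNumber (disjPow Γ a) ≤ fracChromaticNumber Γ ^ a := by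
  refine le_ciInf_pow (fun b => by positivity) fun b => ?_
  calc fracChromaticNumber (disjPow Γ a)
      ≤ (nfoldChromaticNumber (disjPow Γ a) (b ^ a : ℕ+) : ℝ) / (b ^ a : ℕ+) :=
        fracChromaticNumber_le _ _
    _ ≤ (nfoldChromaticNumber Γ b : ℝ) ^ a / (b : ℝ) ^ a := by
        push_cast
        gcongr
        exact_mod_cast nfoldChromaticNumber_disjPow_le Γ a b
    _ = ((nfoldChromaticNumber Γ b : ℝ) / b) ^ a := (div_pow _ _ _).symm

end Colorings

lemma confusionGraph_adj_blockSplit {n : ℕ} {E : Fin n → Fin n → Prop} {t : Fin n → ℕ}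
    {a : ℕ} {x z : (i : Fin n) → Fin (a * t i) → Bool}
    (h : (confusionGraph n E (fun i => a * t i)).Adj x z) :
    (disjPow (confusionGraph n E t) a).Adj (blockSplit n a t x) (blockSplit n a t z) := by
  obtain ⟨j, hj, hin⟩ := h
  obtain ⟨p, hp⟩ := Function.ne_iff.mp hj
  obtain ⟨⟨m, q⟩, rfl⟩ := finProdFinEquiv.surjective p
  exact ⟨m, j, fun heq => hp (congrFun heq q), fun i hi => funext fun q' => by
    simp only [blockSplit, hin i hi]⟩

def blockSplitHom (n : ℕ) (E : Fin n → Fin n → Prop) (t : Fin n → ℕ) (a : ℕ) :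
    confusionGraph n E (fun i => a * t i) →g disjPow (confusionGraph n E t) a where
  toFun := blockSplit n a t
  map_rel' := confusionGraph_adj_blockSplit

theorem confusionGraph_scaled_le_disjPow (n : ℕ) (E : Fin n → Fin n → Prop)
    (t : Fin n → ℕ) (a : ℕ) :
    (∀ x z, (confusionGraph n E (fun i => a * t i)).Adj x z →
      (disjPow (confusionGraph n E t) a).Adj (blockSplit n a t x) (blockSplit n a t z)) ∧
    fracChromaticNumber (confusionGraph n E (fun i => a * t i))
      ≤ fracChromaticNumber (confusionGraph n E t) ^ a :=
  ⟨fun _ _ => confusionGraph_adj_blockSplit,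
    (fracChromaticNumber_le_of_hom (blockSplitHom n E t a)).trans
      (fracChromaticNumber_disjPow_le _ a)⟩
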